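/- ∫₀^∞ z R(x,y,z) dz = x and ∫₀^∞ z³ R(x,y,z) dz = x(x² + 3y² + 12π²), where R(x,y,z) = (1/2)H(x+y,z) + (1/2)H(x−y,z). -/

import Mathlib

/-! Write `g u = 1 / cosh (u / 4)`, so that `4π H(a, z) = g (z - a) - g (z + a)`. As `g` is even and
`k` is odd, reflecting `z ↦ -z` turns `∫₀^∞ z^k (g (z - a) - g (z + a)) dz` into the full-line
moment `∫ (u + a)^k g u du`, which after `u = 4t` is a binomial combination of the moments
`∫ t^j / cosh t`. The odd moments vanish, `∫ 1 / cosh t = π` (a primitive is `arctan ∘ sinh`), and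
`∫ t² / cosh t = π³/4` follows by integrating the expansion
`1 / cosh t = 2 ∑ (-1)ⁿ e^{-(2n+1)t}` termwise against `t²` and using `∑ (-1)ⁿ/(2n+1)³ = π³/32`. -/

open Real MeasureTheory Set Filter Topology

/-- The kernel `H(x,y) = (1/(4π))(1/cosh((x−y)/4) − 1/cosh((x+y)/4))`. -/
noncomputable def Hker (x y : ℝ) : ℝ :=
  (1 / (4 * Real.pi)) *
    (1 / Real.cosh ((x - y) / 4) - 1 / Real.cosh ((x + y) / 4))

/-- The kernel `R(x,y,z) = (1/2)H(x+y,z) + (1/2)H(x−y,z)`. -/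
noncomputable def Rker (x y z : ℝ) : ℝ :=
  (1 / 2) * Hker (x + y) z + (1 / 2) * Hker (x - y) z

lemma integrable_of_integrableOn_Ioi_of_comp_neg {E : Type*} [NormedAddCommGroup E]
    {f : ℝ → E} (hf : IntegrableOn f (Ioi 0)) (hf' : IntegrableOn (fun t => f (-t)) (Ioi 0)) :
    Integrable f := by
  rw [← integrableOn_univ, ← Iic_union_Ioi (a := 0), integrableOn_union]
  refine ⟨?_, hf⟩
  rw [← (Measure.measurePreserving_neg volume).integrableOn_comp_preimage
    (Homeomorph.neg ℝ).measurableEmbedding]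
  simpa only [neg_preimage, neg_Iic, neg_zero, Function.comp_def] using
    (integrableOn_Ici_iff_integrableOn_Ioi).mpr hf'

lemma integrableOn_Ioi_pow_mul_exp_neg_mul (k : ℕ) {c : ℝ} (hc : 0 < c) :
    IntegrableOn (fun t : ℝ => t ^ k * exp (-(c * t))) (Ioi 0) := by
  simpa [rpow_natCast] using integrableOn_rpow_mul_exp_neg_mul_rpow (s := k) (p := 1)
    (by linarith [k.cast_nonneg (α := ℝ)]) one_pos hc

lemma integral_Ioi_sq_mul_exp_neg_mul {c : ℝ} (hc : 0 < c) :
    ∫ t in Ioi 0, t ^ 2 * exp (-(c * t)) = 2 / c ^ 3 := by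
  have h := integral_rpow_mul_exp_neg_mul_Ioi (a := 3) three_pos hc
  rw [show (3 : ℝ) - 1 = (2 : ℕ) by norm_num, show (3 : ℝ) = (2 : ℕ) + 1 by norm_num,
    Gamma_nat_eq_factorial] at h
  simp only [rpow_natCast] at h
  rw [h]
  norm_num
  ring

lemma integrable_pow_mul_comp_sub {g : ℝ → ℝ} {k : ℕ} {a : ℝ}
    (h : Integrable fun u => (u + a) ^ k * g u) : Integrable fun z => z ^ k * g (z - a) := by
  simpa using h.comp_sub_right a

lemma integral_Ioi_pow_mul_sub_of_even {g : ℝ → ℝ} (hg : ∀ u, g (-u) = g u) {k : ℕ}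
    (hk : Odd k) {a : ℝ} (hint : Integrable fun u => (u + a) ^ k * g u) :
    ∫ z in Ioi 0, z ^ k * (g (z - a) - g (z + a)) = ∫ u, (u + a) ^ k * g u := by
  set G : ℝ → ℝ := fun z => z ^ k * g (z - a)
  have hG : Integrable G := integrable_pow_mul_comp_sub hint
  have hrefl (z : ℝ) : z ^ k * (g (z - a) - g (z + a)) = G z + G (-z) := by
    simp only [G, hk.neg_pow, show -z - a = -(z + a) by ring, hg]
    ring
  calc ∫ z in Ioi 0, z ^ k * (g (z - a) - g (z + a))
      = (∫ z in Ioi 0, G z) + ∫ z in Ioi 0, G (-z) := by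
        simp only [hrefl]
        exact integral_add hG.integrableOn hG.comp_neg.integrableOn
    _ = (∫ z in Iic 0, G z) + ∫ z in Ioi 0, G z := by
        rw [integral_comp_neg_Ioi, neg_zero, add_comm]
    _ = ∫ z, G z := intervalIntegral.integral_Iic_add_Ioi hG.integrableOn hG.integrableOn
    _ = ∫ u, (u + a) ^ k * g u := by
        simpa using integral_sub_right_eq_self (fun u => (u + a) ^ k * g u) a

lemma mul_add_pow_div_eq_sum (c a t w : ℝ) (k : ℕ) :
    (c * t + a) ^ k / w =
      ∑ j ∈ Finset.range (k + 1), c ^ j * a ^ (k - j) * k.choose j * (t ^ j / w) := by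
  rw [add_pow, Finset.sum_div]
  refine Finset.sum_congr rfl fun j _ => ?_
  ring

lemma two_mul_add_one_injective : Function.Injective fun n : ℕ => 2 * n + 1 :=
  fun m n h => by simpa using h

lemma hasSum_neg_one_pow_div_two_mul_add_one_pow_three :
    HasSum (fun n : ℕ => (-1 : ℝ) ^ n / (2 * n + 1) ^ 3) (π ^ 3 / 32) := by
  have hzero : ∀ m ∉ range fun n : ℕ => 2 * n + 1,
      (1 : ℝ) / (m : ℝ) ^ 3 * sin (π * m / 2) = 0 := by
    intro m hm
    obtain ⟨j, rfl⟩ : Even m := by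
      rcases m.even_or_odd with he | ⟨n, rfl⟩
      · exact he
      · exact absurd ⟨n, rfl⟩ hm
    rw [show π * ((j + j : ℕ) : ℝ) / 2 = j * π by push_cast; ring, sin_nat_mul_pi, mul_zero]
  refine ((two_mul_add_one_injective.hasSum_iff hzero).mpr hasSum_L_function_mod_four_eval_three).congr_fun fun n => ?_
  rw [Function.comp_apply, show π * ((2 * n + 1 : ℕ) : ℝ) / 2 = n * π + π / 2 by push_cast; ring,
    sin_add_pi_div_two, cos_nat_mul_pi]
  push_cast
  ring

lemma summable_one_div_two_mul_add_one_pow_three :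
    Summable fun n : ℕ => 1 / (2 * (n : ℝ) + 1) ^ 3 := by
  simpa [Function.comp_def] using
    (summable_one_div_nat_pow.mpr (by norm_num : 1 < 3)).comp_injective two_mul_add_one_injective

lemma one_div_cosh_le (t : ℝ) : 1 / cosh t ≤ 2 * exp (-t) := by
  have h : exp (-t) * exp t = 1 := by rw [← exp_add, neg_add_cancel, exp_zero]
  rw [div_le_iff₀ (cosh_pos t), cosh_eq]
  nlinarith [exp_pos (-t)]

lemma integrable_pow_div_cosh (k : ℕ) : Integrable fun t : ℝ => t ^ k / cosh t := by
  have hIoi : IntegrableOn (fun t : ℝ => t ^ k / cosh t) (Ioi 0) := by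
    refine ((integrableOn_Ioi_pow_mul_exp_neg_mul k one_pos).const_mul 2).mono'
      ((continuous_pow k).div continuous_cosh fun t => (cosh_pos t).ne').aestronglyMeasurable ?_
    filter_upwards [ae_restrict_mem measurableSet_Ioi] with t (ht : 0 < t)
    rw [norm_div, norm_pow, Real.norm_of_nonneg ht.le, Real.norm_of_nonneg (cosh_pos t).le,
      div_eq_mul_one_div, mul_left_comm, one_mul]
    exact mul_le_mul_of_nonneg_left (one_div_cosh_le t) (by positivity)
  refine integrable_of_integrableOn_Ioi_of_comp_neg hIoi ?_
  refine IntegrableOn.congr_fun (hIoi.const_mul ((-1) ^ k)) (fun t _ => ?_) measurableSet_Ioi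
  rw [neg_pow t, cosh_neg, mul_div_assoc]

lemma hasDerivAt_arctan_sinh (t : ℝ) : HasDerivAt (fun s => arctan (sinh s)) (1 / cosh t) t := by
  refine ((hasDerivAt_arctan (sinh t)).comp t (hasDerivAt_sinh t)).congr_deriv ?_
  rw [← cosh_sq']
  field_simp [(cosh_pos t).ne']

lemma integral_one_div_cosh : ∫ t, 1 / cosh t = π := by
  have hbot : Tendsto (fun s => arctan (sinh s)) atBot (𝓝 (-(π / 2))) :=
    (tendsto_arctan_atBot.mono_right nhdsWithin_le_nhds).comp sinhOrderIso.tendsto_atBot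
  have htop : Tendsto (fun s => arctan (sinh s)) atTop (𝓝 (π / 2)) :=
    (tendsto_arctan_atTop.mono_right nhdsWithin_le_nhds).comp sinhOrderIso.tendsto_atTop
  rw [integral_of_hasDerivAt_of_tendsto hasDerivAt_arctan_sinh
    (by simpa using integrable_pow_div_cosh 0) hbot htop]
  ring

lemma integral_pow_div_cosh_of_odd {k : ℕ} (hk : Odd k) : ∫ t, t ^ k / cosh t = 0 := by
  have h := integral_neg_eq_self (fun t : ℝ => t ^ k / cosh t) volume
  simp only [hk.neg_pow, cosh_neg, neg_div, integral_neg] at h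
  linarith

lemma integral_div_cosh : ∫ t, t / cosh t = 0 := by
  simpa using integral_pow_div_cosh_of_odd odd_one

lemma hasSum_one_div_cosh {t : ℝ} (ht : 0 < t) :
    HasSum (fun n : ℕ => 2 * (-1) ^ n * exp (-((2 * n + 1) * t))) (1 / cosh t) := by
  have hr : ‖-exp (-(2 * t))‖ < 1 := by
    rw [norm_neg, Real.norm_of_nonneg (exp_pos _).le, exp_lt_one_iff]
    linarith
  have hsum := (hasSum_geometric_of_norm_lt_one hr).mul_left (2 * exp (-t))
  have hval : 2 * exp (-t) * (1 - -exp (-(2 * t)))⁻¹ = 1 / cosh t := by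
    have h : exp (-t) * exp t = 1 := by rw [← exp_add, neg_add_cancel, exp_zero]
    have h2 : exp (-(2 * t)) = exp (-t) * exp (-t) := by rw [← exp_add]; ring_nf
    rw [cosh_eq, sub_neg_eq_add, h2]
    field_simp
    linear_combination h
  rw [hval] at hsum
  refine hsum.congr_fun fun n => ?_
  rw [neg_pow (exp _), ← exp_nat_mul, show -((2 * n + 1) * t) = -t + n * -(2 * t) by ring, exp_add]
  ring

lemma integral_Ioi_sq_div_cosh : ∫ t in Ioi 0, t ^ 2 / cosh t = π ^ 3 / 8 := by
  set F : ℕ → ℝ → ℝ := fun n t => t ^ 2 * (2 * (-1) ^ n * exp (-((2 * n + 1) * t)))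
  have hc (n : ℕ) : (0 : ℝ) < 2 * n + 1 := by positivity
  have hint (n : ℕ) : IntegrableOn (F n) (Ioi 0) := by
    simp only [F, mul_left_comm _ (2 * (-1 : ℝ) ^ n)]
    exact (integrableOn_Ioi_pow_mul_exp_neg_mul 2 (hc n)).const_mul _
  have hF (n : ℕ) : ∫ t in Ioi 0, F n t = 4 * ((-1) ^ n / (2 * n + 1) ^ 3) := by
    simp only [F, mul_left_comm _ (2 * (-1 : ℝ) ^ n)]
    rw [integral_const_mul, integral_Ioi_sq_mul_exp_neg_mul (hc n)]
    ring
  have hnorm (n : ℕ) : ∫ t in Ioi 0, ‖F n t‖ = 4 * (1 / (2 * n + 1) ^ 3) := by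
    simp only [F, norm_mul, norm_pow, norm_neg, norm_one, one_pow, mul_one, Real.norm_eq_abs,
      abs_two, sq_abs, abs_exp, mul_left_comm _ (2 : ℝ)]
    rw [integral_const_mul, integral_Ioi_sq_mul_exp_neg_mul (hc n)]
    ring
  have hsummable : Summable fun n => ∫ t in Ioi 0, ‖F n t‖ := by
    simpa only [hnorm] using summable_one_div_two_mul_add_one_pow_three.mul_left 4
  have hpt : ∀ t ∈ Ioi (0 : ℝ), ∑' n, F n t = t ^ 2 / cosh t := fun t ht => by
    rw [div_eq_mul_one_div, ((hasSum_one_div_cosh ht).mul_left (t ^ 2)).tsum_eq]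
  have hswap : HasSum (fun n => ∫ t in Ioi 0, F n t) (∫ t in Ioi 0, t ^ 2 / cosh t) := by
    rw [← setIntegral_congr_fun measurableSet_Ioi hpt]
    exact hasSum_integral_of_summable_integral_norm hint hsummable
  have hseries : HasSum (fun n => ∫ t in Ioi 0, F n t) (4 * (π ^ 3 / 32)) :=
    (hasSum_neg_one_pow_div_two_mul_add_one_pow_three.mul_left 4).congr_fun hF
  rw [hswap.unique hseries]
  ring

lemma integral_sq_div_cosh : ∫ t, t ^ 2 / cosh t = π ^ 3 / 4 := by
  have h := integral_comp_abs (f := fun t => t ^ 2 / cosh t)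
  simp only [sq_abs, cosh_abs] at h
  rw [h, integral_Ioi_sq_div_cosh]
  ring

lemma integrable_mul_add_pow_div_cosh (c a : ℝ) (k : ℕ) :
    Integrable fun t : ℝ => (c * t + a) ^ k / cosh t := by
  simp_rw [mul_add_pow_div_eq_sum]
  exact integrable_finsetSum _ fun j _ => (integrable_pow_div_cosh j).const_mul _

lemma integral_mul_add_pow_div_cosh (c a : ℝ) (k : ℕ) :
    ∫ t, (c * t + a) ^ k / cosh t =
      ∑ j ∈ Finset.range (k + 1), c ^ j * a ^ (k - j) * k.choose j * ∫ t, t ^ j / cosh t := by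
  simp_rw [mul_add_pow_div_eq_sum]
  rw [integral_finsetSum _ fun j _ => (integrable_pow_div_cosh j).const_mul _]
  simp_rw [integral_const_mul]

lemma integrable_add_pow_mul_one_div_cosh_div_four (a : ℝ) (k : ℕ) :
    Integrable fun u : ℝ => (u + a) ^ k * (1 / cosh (u / 4)) := by
  refine ((integrable_mul_add_pow_div_cosh 4 a k).comp_div four_ne_zero).congr
    (ae_of_all _ fun u => ?_)
  simp only [mul_one_div, show 4 * (u / 4) = u by ring]

lemma integral_add_pow_mul_one_div_cosh_div_four (a : ℝ) (k : ℕ) :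
    ∫ u, (u + a) ^ k * (1 / cosh (u / 4)) = 4 * ∫ t, (4 * t + a) ^ k / cosh t := by
  have h := Measure.integral_comp_div (fun t => (4 * t + a) ^ k / cosh t) 4
  simp only [show ∀ u : ℝ, 4 * (u / 4) = u from fun u => by ring,
    abs_of_pos (four_pos : (0 : ℝ) < 4), smul_eq_mul] at h
  simp only [mul_one_div, h]

lemma Hker_eq (a z : ℝ) :
    Hker a z = 1 / (4 * π) * (1 / cosh ((z - a) / 4) - 1 / cosh ((z + a) / 4)) := by
  rw [Hker, ← cosh_neg ((a - z) / 4), ← neg_div, neg_sub, add_comm a z]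

lemma integrable_pow_mul_Hker (a : ℝ) (k : ℕ) : Integrable fun z => z ^ k * Hker a z := by
  have h₁ := integrable_pow_mul_comp_sub (integrable_add_pow_mul_one_div_cosh_div_four a k)
  have h₂ := integrable_pow_mul_comp_sub (integrable_add_pow_mul_one_div_cosh_div_four (-a) k)
  simp only [sub_neg_eq_add] at h₂
  simp_rw [Hker_eq, mul_left_comm _ (1 / (4 * π)), mul_sub]
  exact (h₁.const_mul _).sub (h₂.const_mul _)

lemma integral_Ioi_pow_mul_Hker {k : ℕ} (hk : Odd k) (a : ℝ) :
    ∫ z in Ioi 0, z ^ k * Hker a z = (∫ t, (4 * t + a) ^ k / cosh t) / π := by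
  have h := integral_Ioi_pow_mul_sub_of_even (g := fun u => 1 / cosh (u / 4))
    (fun u => by rw [neg_div, cosh_neg]) hk (integrable_add_pow_mul_one_div_cosh_div_four a k)
  simp_rw [Hker_eq, mul_left_comm _ (1 / (4 * π))]
  rw [integral_const_mul, h, integral_add_pow_mul_one_div_cosh_div_four]
  field_simp

lemma integral_Ioi_mul_Hker (a : ℝ) : ∫ z in Ioi 0, z * Hker a z = a := by
  have h := integral_Ioi_pow_mul_Hker odd_one a
  rw [integral_mul_add_pow_div_cosh] at h
  simp only [Finset.sum_range_succ, Finset.sum_range_one, pow_zero, pow_one,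
    integral_one_div_cosh, integral_div_cosh] at h
  rw [h]
  field_simp
  simp [mul_comm]

lemma integral_Ioi_pow_three_mul_Hker (a : ℝ) :
    ∫ z in Ioi 0, z ^ 3 * Hker a z = a ^ 3 + 12 * π ^ 2 * a := by
  rw [integral_Ioi_pow_mul_Hker (by decide) a, integral_mul_add_pow_div_cosh]
  simp only [Finset.sum_range_succ, Finset.sum_range_zero, pow_zero, pow_one,
    integral_one_div_cosh, integral_div_cosh, integral_sq_div_cosh,
    integral_pow_div_cosh_of_odd (show Odd 3 by decide)]
  field_simp
  simp [Nat.choose]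
  ring

lemma integral_Ioi_pow_mul_Rker (x y : ℝ) (k : ℕ) :
    ∫ z in Ioi 0, z ^ k * Rker x y z =
      (∫ z in Ioi 0, z ^ k * Hker (x + y) z) / 2 + (∫ z in Ioi 0, z ^ k * Hker (x - y) z) / 2 := by
  simp_rw [Rker, mul_add, mul_left_comm _ (1 / 2 : ℝ)]
  rw [integral_add ((integrable_pow_mul_Hker _ k).integrableOn.const_mul _)
    ((integrable_pow_mul_Hker _ k).integrableOn.const_mul _), integral_const_mul,
    integral_const_mul]
  ring

/-- `∫₀^∞ z R(x,y,z) dz = x` and `∫₀^∞ z³ R(x,y,z) dz = x(x² + 3y² + 12π²)`. -/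
theorem stmt8 (x y : ℝ) :
    (∫ z in Set.Ioi (0 : ℝ), z * Rker x y z) = x ∧
    (∫ z in Set.Ioi (0 : ℝ), z ^ 3 * Rker x y z) =
      x * (x ^ 2 + 3 * y ^ 2 + 12 * Real.pi ^ 2) := by
  have h₁ := integral_Ioi_pow_mul_Rker x y 1
  simp only [pow_one] at h₁
  refine ⟨?_, ?_⟩
  · rw [h₁, integral_Ioi_mul_Hker, integral_Ioi_mul_Hker]
    ring
  · rw [integral_Ioi_pow_mul_Rker, integral_Ioi_pow_three_mul_Hker,
      integral_Ioi_pow_three_mul_Hker]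
    ring
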